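/- Let C and D be linear codes in F_q^n with dim C + dim D = n, and suppose D is MDS with dim D = n - k where 0 < k < n. If q ≥ 3, then there exists a vector a ∈ (F_q^*)^n such that (aC, D) is a linear complementary pair, i.e., aC ⊕ D = F_q^n. -/

import Mathlib

variable {F : Type*} [Field F] {n : ℕ}

/-- Coordinatewise scaling by `a` as a linear map on `F^n`. -/
def scaleMap (a : Fin n → F) : (Fin n → F) →ₗ[F] (Fin n → F) where
  toFun x := fun i => a i * x i
  map_add' x y := by funext i; simp [mul_add]
  map_smul' r x := by funext i; simp [smul_eq_mul]; ring

/-!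
For `a ∈ F^n` consider `Φ_a : C → F^n ⧸ D`, `c ↦ [a * c]`; `(aC, D)` is an LCP as soon as `Φ_a`
is injective, i.e. `Disjoint C (D.comap (scaleMap a))`, and `a` has no zero coordinate.

Injectivity holds at the indicator vector of a set `S` of at most `dim C ≤ k` coordinates on
which no nonzero codeword of `C` vanishes: `a * c` then has weight at most `k`, so it lies in the
MDS code `D` only if it is zero, forcing `c = 0`.

Moving a single coordinate `a i = t` changes `Φ_a` by a rank-one map depending linearly on `t`,
so if `Φ_a` fails to be injective for two values of `t`, it fails for all of them. Since `F` has
at least two nonzero elements, the coordinates of the indicator vector can then be replaced one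
at a time by nonzero values while keeping `Φ_a` injective.
-/

@[simp]
lemma scaleMap_apply (a x : Fin n → F) (i : Fin n) : scaleMap a x i = a i * x i := rfl

lemma exists_forall_ne_zero_of_update {ι : Type*} [Fintype ι] [DecidableEq ι] [Fintype F]
    (hF : 2 < Fintype.card F) (P : (ι → F) → Prop)
    (hP : ∀ a i (t₁ t₂ t : F), t₁ ≠ t₂ →
      ¬P (Function.update a i t₁) → ¬P (Function.update a i t₂) → ¬P (Function.update a i t))
    {a₀ : ι → F} (ha₀ : P a₀) : ∃ a, (∀ i, a i ≠ 0) ∧ P a := by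
  classical
  obtain ⟨t₂, -, ht₂⟩ := Finset.exists_mem_notMem_of_card_lt_card
    (s := {0, 1}) (t := Finset.univ) (Finset.card_le_two.trans_lt hF)
  simp only [Finset.mem_insert, Finset.mem_singleton, not_or] at ht₂
  suffices ∀ s : Finset ι, ∃ a, P a ∧ ∀ i ∈ s, a i ≠ 0 by
    obtain ⟨a, ha, hne⟩ := this Finset.univ
    exact ⟨a, fun i => hne i (Finset.mem_univ i), ha⟩
  intro s
  induction s using Finset.induction_on with
  | empty => exact ⟨a₀, ha₀, by simp⟩
  | insert i s hi ih =>
    obtain ⟨a, ha, hne⟩ := ih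
    obtain ⟨t, ht, hPt⟩ : ∃ t ≠ 0, P (Function.update a i t) := by
      by_contra! h
      refine hP a i 1 t₂ (a i) (Ne.symm ht₂.2) (h 1 one_ne_zero) (h t₂ ht₂.1) ?_
      rwa [Function.update_eq_self]
    refine ⟨Function.update a i t, hPt,
      (Finset.forall_mem_insert _ _ _).mpr ⟨by simpa, fun j hj => ?_⟩⟩
    rw [Function.update_of_ne (ne_of_mem_of_not_mem hj hi)]
    exact hne j hj

lemma Submodule.exists_finset_card_le_finrank_eq_zero_of_eqOn_zero {ι : Type*} [Finite ι]
    (W : Submodule F (ι → F)) :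
    ∃ S : Finset ι, S.card ≤ Module.finrank F W ∧ ∀ c ∈ W, (∀ i ∈ S, c i = 0) → c = 0 := by
  classical
  suffices ∀ m (W : Submodule F (ι → F)), Module.finrank F W ≤ m →
      ∃ S : Finset ι, S.card ≤ m ∧ ∀ c ∈ W, (∀ i ∈ S, c i = 0) → c = 0 from this _ W le_rfl
  intro m
  induction m with
  | zero =>
    intro W hW
    rw [Nat.le_zero, Submodule.finrank_eq_zero] at hW
    exact ⟨∅, le_rfl, fun c hc _ => by simpa [hW] using hc⟩
  | succ m ih =>
    intro W hW
    by_cases hbot : W = ⊥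
    · exact ⟨∅, Nat.zero_le _, fun c hc _ => by simpa [hbot] using hc⟩
    obtain ⟨c₀, hc₀W, hc₀⟩ := Submodule.exists_mem_ne_zero_of_ne_bot hbot
    obtain ⟨i, hi⟩ : ∃ i, c₀ i ≠ 0 := Function.ne_iff.mp hc₀
    set W' := W ⊓ LinearMap.ker (LinearMap.proj i : (ι → F) →ₗ[F] F)
    have hlt : Module.finrank F W' < Module.finrank F W := by
      refine Submodule.finrank_lt_finrank_of_lt (lt_of_le_of_ne inf_le_left fun hW => hi ?_)
      have : c₀ ∈ W' := hW ▸ hc₀W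
      simpa using this.2
    obtain ⟨S, hS_card, hS⟩ := ih W' (by omega)
    refine ⟨insert i S, (Finset.card_insert_le _ _).trans (by omega), fun c hc hvan => ?_⟩
    refine hS c ⟨hc, ?_⟩ fun j hj => hvan j (Finset.mem_insert_of_mem hj)
    simpa using hvan i (Finset.mem_insert_self _ _)

lemma disjoint_comap_scaleMap_indicator [DecidableEq F] {C D : Submodule F (Fin n → F)}
    {S : Finset (Fin n)} {k : ℕ} (hS : ∀ c ∈ C, (∀ i ∈ S, c i = 0) → c = 0)
    (hS_card : S.card ≤ k) (hD : ∀ x ∈ D, x ≠ 0 → k + 1 ≤ hammingNorm x) :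
    Disjoint C (D.comap (scaleMap fun i => if i ∈ S then 1 else 0)) := by
  rw [Submodule.disjoint_def]
  intro c hc hcD
  have hweight : hammingNorm (scaleMap (fun i => if i ∈ S then 1 else 0) c) ≤ S.card := by
    refine Finset.card_le_card fun i hi => ?_
    by_contra hiS
    simp [hiS] at hi
  have hzero : scaleMap (fun i => if i ∈ S then 1 else 0) c = 0 := by
    by_contra h0
    have := hD _ hcD h0
    omega
  refine hS c hc fun i hi => ?_
  simpa [hi] using congrFun hzero i

lemma not_disjoint_comap_scaleMap_update (C D : Submodule F (Fin n → F)) (a : Fin n → F)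
    (i : Fin n) {t₁ t₂ : F} (ht : t₁ ≠ t₂)
    (h₁ : ¬Disjoint C (D.comap (scaleMap (Function.update a i t₁))))
    (h₂ : ¬Disjoint C (D.comap (scaleMap (Function.update a i t₂)))) (t : F) :
    ¬Disjoint C (D.comap (scaleMap (Function.update a i t))) := by
  simp only [Submodule.disjoint_def, Submodule.mem_comap, not_forall] at h₁ h₂ ⊢
  obtain ⟨c₁, hc₁, hc₁D, hc₁0⟩ := h₁
  obtain ⟨c₂, hc₂, hc₂D, hc₂0⟩ := h₂
  have update_of_eq_zero : ∀ c : Fin n → F, c i = 0 → ∀ s,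
      scaleMap (Function.update a i s) c = scaleMap (Function.update a i t) c := by
    intro c hc s
    funext j
    rcases eq_or_ne j i with rfl | hj <;> simp [*]
  by_cases e₁ : c₁ i = 0
  · exact ⟨c₁, hc₁, update_of_eq_zero c₁ e₁ t₁ ▸ hc₁D, hc₁0⟩
  by_cases e₂ : c₂ i = 0
  · exact ⟨c₂, hc₂, update_of_eq_zero c₂ e₂ t₂ ▸ hc₂D, hc₂0⟩
  -- The rank-one parts `t * c₁ i` and `t * c₂ i` at coordinate `i` cancel in this combination.
  set c := ((t₂ - t) * c₂ i) • c₁ + ((t - t₁) * c₁ i) • c₂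
  have hc : scaleMap (Function.update a i t) c =
      ((t₂ - t) * c₂ i) • scaleMap (Function.update a i t₁) c₁ +
        ((t - t₁) * c₁ i) • scaleMap (Function.update a i t₂) c₂ := by
    funext j
    rcases eq_or_ne j i with rfl | hj
    · simp only [c, scaleMap_apply, Function.update_self, Pi.add_apply, Pi.smul_apply, smul_eq_mul]
      ring
    · simp only [c, scaleMap_apply, Function.update_of_ne hj, Pi.add_apply, Pi.smul_apply,
        smul_eq_mul]
      ring
  refine ⟨c, C.add_mem (C.smul_mem _ hc₁) (C.smul_mem _ hc₂),
    hc ▸ D.add_mem (D.smul_mem _ hc₁D) (D.smul_mem _ hc₂D), fun h0 => ?_⟩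
  have hci : (t₂ - t₁) * c₁ i * c₂ i = 0 := by
    have := congrFun h0 i
    simp only [c, Pi.add_apply, Pi.smul_apply, smul_eq_mul, Pi.zero_apply] at this
    linear_combination this
  exact mul_ne_zero (mul_ne_zero (sub_ne_zero.mpr ht.symm) e₁) e₂ hci

lemma isCompl_map_scaleMap {C D : Submodule F (Fin n → F)} {a : Fin n → F}
    (ha : ∀ i, a i ≠ 0) (hdim : Module.finrank F C + Module.finrank F D = n)
    (h : Disjoint C (D.comap (scaleMap a))) : IsCompl (C.map (scaleMap a)) D := by
  have hinj : Function.Injective (scaleMap a) := fun x y hxy =>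
    funext fun i => mul_left_cancel₀ (ha i) (congrFun hxy i)
  rw [Submodule.isCompl_iff_disjoint _ _ (by
    rw [← LinearEquiv.finrank_eq (C.equivMapOfInjective _ hinj)]; simp [hdim])]
  rw [Submodule.disjoint_def]
  rintro _ ⟨c, hc, rfl⟩ hcD
  rw [Submodule.disjoint_def.mp h c hc hcD, map_zero]

theorem exists_scaling_lcp_general [Fintype F] [DecidableEq F]
    (C D : Submodule F (Fin n → F)) (k : ℕ)
    (hq : 3 ≤ Fintype.card F)
    (hdim : Module.finrank F C + Module.finrank F D = n)
    (hD : Module.finrank F D = n - k)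
    (hMDS : ∀ x ∈ D, x ≠ 0 → k + 1 ≤ hammingNorm x) :
    ∃ a : Fin n → F, (∀ i, a i ≠ 0) ∧ IsCompl (C.map (scaleMap a)) D := by
  obtain ⟨S, hS_card, hS⟩ := C.exists_finset_card_le_finrank_eq_zero_of_eqOn_zero
  have h₀ := disjoint_comap_scaleMap_indicator hS (by omega) hMDS
  obtain ⟨a, ha, hdisj⟩ := exists_forall_ne_zero_of_update (by omega)
    (fun a => Disjoint C (D.comap (scaleMap a)))
    (fun a i _ _ t ht h₁ h₂ => not_disjoint_comap_scaleMap_update C D a i ht h₁ h₂ t) h₀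
  exact ⟨a, ha, isCompl_map_scaleMap ha hdim hdisj⟩

/-- if `dim C + dim D = n`, `D` is MDS of dimension `n - k`
(every nonzero codeword of `D` has weight at least `k + 1`), `0 < k < n`, and
`q ≥ 3`, then there is `a ∈ (F*)^n` with `(aC, D)` an LCP. -/
theorem exists_scaling_lcp [Fintype F] [DecidableEq F]
    (C D : Submodule F (Fin n → F)) (k : ℕ) (hk0 : 0 < k) (hkn : k < n)
    (hq : 3 ≤ Fintype.card F)
    (hdim : Module.finrank F C + Module.finrank F D = n)
    (hD : Module.finrank F D = n - k)
    (hMDS : ∀ x ∈ D, x ≠ 0 → k + 1 ≤ hammingNorm x) :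
    ∃ a : Fin n → F, (∀ i, a i ≠ 0) ∧ IsCompl (C.map (scaleMap a)) D :=
  exists_scaling_lcp_general C D k hq hdim hD hMDS
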